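/- arXiv:2102.05793 — 2 statements merged into one kernel-verified Lean document; each statement's English description precedes it below -/
import Mathlib

section
/- Let x_1,…,x_n ∈ D and let S ⊆ {1,…,n}. Then for every x ∈ D, the posterior variance conditioned on all n points is at most the posterior variance conditioned on the sub-tuple (x_i)_{i∈S}; i.e., adding points to the set of conditioning points cannot increase the Gaussian process posterior variance. -/
open Matrix Real MeasureTheory

noncomputable section

/-- The Gram (kernel) matrix of the kernel `k` at the points `xs`. -/
def kerMat {D : Type*} (k : D → D → ℝ) {t : ℕ} (xs : Fin t → D) :
    Matrix (Fin t) (Fin t) ℝ :=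
  Matrix.of fun i j => k (xs i) (xs j)

/-- The kernel vector `k_t(x) = (k(x_1,x),…,k(x_t,x))`. -/
def kerVec {D : Type*} (k : D → D → ℝ) {t : ℕ} (xs : Fin t → D) (x : D) : Fin t → ℝ :=
  fun i => k (xs i) x

/-- The GP posterior variance `σ_t²(x)` given conditioning points `xs`; for `t = 0`
it equals `k x x` since the empty dot product is `0`. -/
def postVar {D : Type*} (k : D → D → ℝ) (lam : ℝ) {t : ℕ} (xs : Fin t → D) (x : D) : ℝ :=
  k x x -
    kerVec k xs x ⬝ᵥ ((kerMat k xs + lam • (1 : Matrix (Fin t) (Fin t) ℝ))⁻¹ *ᵥ kerVec k xs x)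

/-- The GP posterior mean `μ_t(x)` given conditioning points `xs` and observations `ys`;
for `t = 0` it equals `0`. -/
def postMean {D : Type*} (k : D → D → ℝ) (lam : ℝ) {t : ℕ} (xs : Fin t → D)
    (ys : Fin t → ℝ) (x : D) : ℝ :=
  kerVec k xs x ⬝ᵥ ((kerMat k xs + lam • (1 : Matrix (Fin t) (Fin t) ℝ))⁻¹ *ᵥ ys)

/-!
For positive definite `M`, completing the square shows that `v ⬝ᵥ M⁻¹ *ᵥ v` is the maximum of
`2 (α ⬝ᵥ v) - α ⬝ᵥ M *ᵥ α` over all `α`. Conditioning on a sub-tuple of the points replaces the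
regularised Gram matrix by a principal submatrix and the kernel vector by its restriction, which
amounts to maximising only over `α` supported on the sub-tuple. The subtracted term can therefore
only shrink, and the posterior variance only grow.
-/

namespace Matrix.PosDef

variable {m n : Type*} [Fintype m] [Fintype n] [DecidableEq m] [DecidableEq n]
  {M : Matrix n n ℝ}

theorem two_mul_dotProduct_sub_le_dotProduct_inv_mulVec (hM : M.PosDef) (α v : n → ℝ) :
    2 * (α ⬝ᵥ v) - α ⬝ᵥ (M *ᵥ α) ≤ v ⬝ᵥ (M⁻¹ *ᵥ v) := by
  have hMM : M *ᵥ (M⁻¹ *ᵥ v) = v := by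
    rw [mulVec_mulVec, mul_nonsing_inv _ ((isUnit_iff_isUnit_det M).mp hM.isUnit), one_mulVec]
  have hMt : Mᵀ = M := by simpa [conjTranspose_eq_transpose_of_trivial] using hM.isHermitian.eq
  have hsymm : ∀ a b : n → ℝ, a ⬝ᵥ (M *ᵥ b) = b ⬝ᵥ (M *ᵥ a) := fun a b => by
    rw [dotProduct_mulVec, ← mulVec_transpose, hMt, dotProduct_comm]
  have hsq := hM.posSemidef.dotProduct_mulVec_nonneg (α - M⁻¹ *ᵥ v)
  simp only [star_trivial, mulVec_sub, hMM, dotProduct_sub, sub_dotProduct] at hsq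
  rw [hsymm (M⁻¹ *ᵥ v) α, hMM, dotProduct_comm (M⁻¹ *ᵥ v) v] at hsq
  linarith

theorem dotProduct_inv_mulVec_transpose_mul_mul_le (hM : M.PosDef) (B : Matrix n m ℝ)
    (hB : IsUnit (Bᵀ * M * B)) (v : n → ℝ) :
    (Bᵀ *ᵥ v) ⬝ᵥ ((Bᵀ * M * B)⁻¹ *ᵥ (Bᵀ *ᵥ v)) ≤ v ⬝ᵥ (M⁻¹ *ᵥ v) := by
  set w := Bᵀ *ᵥ v
  set u := (Bᵀ * M * B)⁻¹ *ᵥ w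
  have hBu : ∀ y, (B *ᵥ u) ⬝ᵥ y = u ⬝ᵥ (Bᵀ *ᵥ y) := fun y => by
    rw [dotProduct_mulVec, vecMul_transpose]
  have hNu : (Bᵀ * M * B) *ᵥ u = w := by
    rw [mulVec_mulVec, mul_nonsing_inv _ ((isUnit_iff_isUnit_det _).mp hB), one_mulVec]
  have hquad : (B *ᵥ u) ⬝ᵥ (M *ᵥ (B *ᵥ u)) = u ⬝ᵥ w := by
    rw [hBu, mulVec_mulVec, mulVec_mulVec, hNu]
  have := hM.two_mul_dotProduct_sub_le_dotProduct_inv_mulVec (B *ᵥ u) v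
  rw [hquad, hBu, dotProduct_comm u w] at this
  linarith

theorem dotProduct_inv_mulVec_submatrix_le (hM : M.PosDef) {e : m → n}
    (he : Function.Injective e) (v : n → ℝ) :
    (v ∘ e) ⬝ᵥ ((M.submatrix e e)⁻¹ *ᵥ (v ∘ e)) ≤ v ⬝ᵥ (M⁻¹ *ᵥ v) := by
  set B : Matrix n m ℝ := (1 : Matrix n n ℝ).submatrix id e
  have hBv : Bᵀ *ᵥ v = v ∘ e := by
    ext i
    simp [B, mulVec, dotProduct, one_apply]
  have hBMB : Bᵀ * M * B = M.submatrix e e := by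
    ext i j
    simp [B, mul_apply, one_apply]
  simpa [hBv, hBMB] using
    hM.dotProduct_inv_mulVec_transpose_mul_mul_le B (hBMB ▸ (hM.submatrix he).isUnit) v

end Matrix.PosDef

section GaussianProcess

variable {D : Type*} (k : D → D → ℝ) (lam : ℝ) {s t : ℕ}

theorem posDef_kerMat_add_smul_one {xs : Fin t → D} (hK : (kerMat k xs).PosSemidef)
    (hlam : 0 < lam) : (kerMat k xs + lam • (1 : Matrix (Fin t) (Fin t) ℝ)).PosDef :=
  PosDef.posSemidef_add hK (PosDef.one.smul hlam)

theorem kerMat_comp_add_smul_one_eq_submatrix (xs : Fin t → D) {e : Fin s → Fin t}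
    (he : Function.Injective e) :
    kerMat k (xs ∘ e) + lam • (1 : Matrix (Fin s) (Fin s) ℝ) =
      (kerMat k xs + lam • (1 : Matrix (Fin t) (Fin t) ℝ)).submatrix e e := by
  ext i j
  simp [kerMat, one_apply, he.eq_iff]

theorem postVar_le_postVar_comp {xs : Fin t → D} (hK : (kerMat k xs).PosSemidef)
    (hlam : 0 < lam) {e : Fin s → Fin t} (he : Function.Injective e) (x : D) :
    postVar k lam xs x ≤ postVar k lam (xs ∘ e) x := by
  have key := (posDef_kerMat_add_smul_one k lam hK hlam).dotProduct_inv_mulVec_submatrix_le he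
    (kerVec k xs x)
  rw [← kerMat_comp_add_smul_one_eq_submatrix k lam xs he] at key
  exact sub_le_sub_left key _

end GaussianProcess

theorem posterior_variance_antitone_in_conditioning_points_general {D : Type*}
    (k : D → D → ℝ) (lam : ℝ)
    (hPSD : ∀ (m : ℕ) (xs : Fin m → D), (kerMat k xs).PosSemidef)
    (hlam : 0 < lam)
    (n : ℕ) (xs : Fin n → D) (S : Finset (Fin n)) (x : D) :
    postVar k lam xs x ≤ postVar k lam (fun i => xs (S.orderEmbOfFin rfl i)) x :=
  postVar_le_postVar_comp k lam (hPSD n xs) hlam (S.orderEmbOfFin rfl).injective x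

/-- Adding points to the set of conditioning points cannot increase the
Gaussian process posterior variance: the posterior variance conditioned on all `n` points
`x_1,…,x_n` is at most the posterior variance conditioned on the sub-tuple `(x_i)_{i ∈ S}`. -/
theorem posterior_variance_antitone_in_conditioning_points {D : Type*} [Nonempty D]
    (k : D → D → ℝ) (lam : ℝ)
    (hsym : ∀ x y : D, k x y = k y x)
    (hPSD : ∀ (m : ℕ) (xs : Fin m → D), (kerMat k xs).PosSemidef)
    (hlam : 0 < lam)
    (n : ℕ) (xs : Fin n → D) (S : Finset (Fin n)) (x : D) :
    postVar k lam xs x ≤ postVar k lam (fun i => xs (S.orderEmbOfFin rfl i)) x :=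
  posterior_variance_antitone_in_conditioning_points_general k lam hPSD hlam n xs S x
end
end

section
/- For every N ≥ 1 and every tuple of points x_1,…,x_N ∈ D, one has log det(I_N + λ^{-1} K_N) = ∑_{i=1}^N log(1 + λ^{-1} σ_{i-1}²(x_i)), where σ_{i-1}² denotes the posterior variance conditioned on the first i−1 points x_1,…,x_{i-1} and K_N = (k(x_i,x_j))_{i,j=1}^N. -/
/-!
Bordering the regularised Gram matrix `K_t + λI` by one more point `x`, the Schur complement of
the old block is `λ + σ_t²(x)`, so `det (K_{t+1} + λI) = det (K_t + λI) * (λ + σ_t²(x_{t+1}))`.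
Telescoping and dividing by `λ^N` gives `det (I + λ⁻¹ K_N) = ∏ (1 + λ⁻¹ σ_{i-1}²(x_i))`. Each
factor is positive, being a ratio of determinants of positive definite matrices, so the logarithm
splits into the sum.
-/

open Matrix Real MeasureTheory

noncomputable section

theorem Matrix.det_succ_eq_det_mul_schur {R : Type*} [CommRing R] {n : ℕ}
    (M : Matrix (Fin (n + 1)) (Fin (n + 1)) R)
    (hA : IsUnit (M.submatrix Fin.castSucc Fin.castSucc).det) :
    M.det = (M.submatrix Fin.castSucc Fin.castSucc).det *
      (M (Fin.last n) (Fin.last n) - (fun j => M (Fin.last n) j.castSucc) ⬝ᵥ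
        ((M.submatrix Fin.castSucc Fin.castSucc)⁻¹ *ᵥ fun i => M i.castSucc (Fin.last n))) := by
  let := (M.submatrix Fin.castSucc Fin.castSucc).invertibleOfIsUnitDet hA
  rw [← det_submatrix_equiv_self finSumFinEquiv, ← fromBlocks_toBlocks (M.submatrix _ _)]
  change (fromBlocks (M.submatrix Fin.castSucc Fin.castSucc) _ _ _).det = _
  rw [det_fromBlocks₁₁, det_fin_one, invOf_eq_nonsing_inv, dotProduct_mulVec]
  rfl

open scoped ComplexOrder in
theorem Matrix.PosSemidef.posDef_add_smul_one {𝕜 n : Type*} [RCLike 𝕜] [Fintype n]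
    [DecidableEq n] {A : Matrix n n 𝕜} (hA : A.PosSemidef) {c : ℝ} (hc : 0 < c) :
    (A + c • 1).PosDef :=
  PosDef.posSemidef_add hA (PosDef.one.smul hc)

section Kernel

variable {D : Type*} (k : D → D → ℝ) {lam : ℝ}

theorem det_kerMat_add_smul_one_succ {t : ℕ} (xs : Fin (t + 1) → D)
    (hK : (kerMat k xs).PosSemidef) (hlam : 0 < lam) :
    (kerMat k xs + lam • 1).det =
      (kerMat k (Fin.init xs) + lam • 1).det *
        (lam + postVar k lam (Fin.init xs) (xs (Fin.last t))) := by
  have hinit : (kerMat k xs + lam • 1).submatrix Fin.castSucc Fin.castSucc =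
      kerMat k (Fin.init xs) + lam • 1 := by
    ext i j
    simp [kerMat, Fin.init, one_apply, Fin.castSucc_inj]
  have hunit : IsUnit (kerMat k (Fin.init xs) + lam • 1).det :=
    ((hK.submatrix Fin.castSucc).posDef_add_smul_one hlam).det_pos.ne'.isUnit
  have hcol : (fun i => (kerMat k xs + lam • 1) i.castSucc (Fin.last t)) =
      kerVec k (Fin.init xs) (xs (Fin.last t)) := by
    funext i
    simp [kerMat, kerVec, Fin.init, one_apply_ne (Fin.castSucc_lt_last i).ne]
  have hrow : (fun j => (kerMat k xs + lam • 1) (Fin.last t) j.castSucc) =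
      kerVec k (Fin.init xs) (xs (Fin.last t)) := by
    funext j
    -- no symmetry of `k` is assumed: it comes from the Gram matrix being Hermitian
    simpa [kerMat, kerVec, Fin.init, one_apply_ne (Fin.castSucc_lt_last j).ne'] using
      (hK.isHermitian.apply (Fin.last t) j.castSucc).symm
  rw [det_succ_eq_det_mul_schur _ (hinit ▸ hunit), hinit, hcol, hrow, postVar]
  congr 1
  simp [kerMat]
  ring

theorem det_kerMat_add_smul_one_eq_prod {t : ℕ} (xs : Fin t → D)
    (hK : (kerMat k xs).PosSemidef) (hlam : 0 < lam) :
    (kerMat k xs + lam • 1).det =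
      ∏ i : Fin t,
        (lam + postVar k lam (fun j : Fin i.1 => xs ⟨j.1, j.2.trans i.2⟩) (xs i)) := by
  induction t with
  | zero => simp
  | succ t ih =>
    rw [det_kerMat_add_smul_one_succ k xs hK hlam, ih (Fin.init xs) (hK.submatrix _),
      Fin.prod_univ_castSucc]
    rfl

theorem lam_add_postVar_init_pos {t : ℕ} (xs : Fin (t + 1) → D)
    (hK : (kerMat k xs).PosSemidef) (hlam : 0 < lam) :
    0 < lam + postVar k lam (Fin.init xs) (xs (Fin.last t)) := by
  have hdet := (hK.posDef_add_smul_one hlam).det_pos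
  rw [det_kerMat_add_smul_one_succ k xs hK hlam] at hdet
  exact pos_of_mul_pos_right hdet ((hK.submatrix _).posDef_add_smul_one hlam).det_pos.le

theorem det_one_add_inv_smul_kerMat_eq_prod {t : ℕ} (xs : Fin t → D)
    (hK : (kerMat k xs).PosSemidef) (hlam : 0 < lam) :
    (1 + lam⁻¹ • kerMat k xs).det =
      ∏ i : Fin t,
        (1 + lam⁻¹ * postVar k lam (fun j : Fin i.1 => xs ⟨j.1, j.2.trans i.2⟩) (xs i)) := by
  have hscale : 1 + lam⁻¹ • kerMat k xs = lam⁻¹ • (kerMat k xs + lam • 1) := by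
    rw [smul_add, smul_smul, inv_mul_cancel₀ hlam.ne', one_smul, add_comm]
  rw [hscale, det_smul, det_kerMat_add_smul_one_eq_prod k xs hK hlam, Fintype.card_fin,
    ← Fin.prod_const, ← Finset.prod_mul_distrib]
  simp only [mul_add, inv_mul_cancel₀ hlam.ne']

end Kernel

theorem logdet_eq_sum_log_posterior_variances_general {D : Type*}
    (k : D → D → ℝ) (lam : ℝ)
    (hPSD : ∀ (m : ℕ) (xs : Fin m → D), (kerMat k xs).PosSemidef)
    (hlam : 0 < lam)
    (N : ℕ) (xs : Fin N → D) :
    Real.log ((1 + lam⁻¹ • kerMat k xs).det)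
      = ∑ i : Fin N,
          Real.log (1 + lam⁻¹ *
            postVar k lam (fun j : Fin i.1 => xs ⟨j.1, j.2.trans i.2⟩) (xs i)) := by
  rw [det_one_add_inv_smul_kerMat_eq_prod k xs (hPSD N xs) hlam, Real.log_prod]
  intro i _
  have hpos := lam_add_postVar_init_pos k (fun j : Fin (i.1 + 1) => xs ⟨j.1, j.2.trans_le i.2⟩)
    (hPSD _ _) hlam
  rw [← mul_pos_iff_of_pos_left (inv_pos.mpr hlam), mul_add, inv_mul_cancel₀ hlam.ne'] at hpos
  exact hpos.ne'

/-- For every `N ≥ 1` and every tuple of points `x_1,…,x_N ∈ D`,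
`log det(I_N + λ⁻¹ K_N) = ∑_{i=1}^N log(1 + λ⁻¹ σ_{i-1}²(x_i))`, where `σ_{i-1}²` is the
posterior variance conditioned on the first `i−1` points `x_1,…,x_{i-1}`. -/
theorem logdet_eq_sum_log_posterior_variances {D : Type*} [Nonempty D]
    (k : D → D → ℝ) (lam : ℝ)
    (hsym : ∀ x y : D, k x y = k y x)
    (hPSD : ∀ (m : ℕ) (xs : Fin m → D), (kerMat k xs).PosSemidef)
    (hlam : 0 < lam)
    (N : ℕ) (hN : 1 ≤ N) (xs : Fin N → D) :
    Real.log ((1 + lam⁻¹ • kerMat k xs).det)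
      = ∑ i : Fin N,
          Real.log (1 + lam⁻¹ *
            postVar k lam (fun j : Fin i.1 => xs ⟨j.1, j.2.trans i.2⟩) (xs i)) :=
  logdet_eq_sum_log_posterior_variances_general k lam hPSD hlam N xs
end
end
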